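/- Every nonzero square-free binary quintic is linearly equivalent either to a quintic of the form f_{s,t} := z1^5 + s·z1^4·z2 + t·z1^3·z2^2 + z2^5 for some s, t ∈ ℂ, or to a quintic of the form f_t := z1^4·z2 + t·z1^3·z2^2 + z2^5 for some t ∈ ℂ. -/

import Mathlib

open MvPolynomial

/-- The polynomial obtained from `Q(z)` by the linear change of variables `z ↦ C z`;
its value at `w` is `Q (C w)`. -/
noncomputable def substMat (M : Matrix (Fin 2) (Fin 2) ℂ) (Q : MvPolynomial (Fin 2) ℂ) :
    MvPolynomial (Fin 2) ℂ :=
  aeval (fun i => MvPolynomial.C (M i 0) * X 0 + MvPolynomial.C (M i 1) * X 1) Q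

/-- Two binary forms are linearly equivalent if one is obtained from the other by an
invertible linear change of the variables. -/
def LinEquiv (Q R : MvPolynomial (Fin 2) ℂ) : Prop :=
  ∃ M : Matrix (Fin 2) (Fin 2) ℂ, IsUnit M.det ∧ substMat M Q = R

/-- The binary quintic `f_{s,t} = z1^5 + s z1^4 z2 + t z1^3 z2^2 + z2^5`. -/
noncomputable def fst (s t : ℂ) : MvPolynomial (Fin 2) ℂ :=
  X 0 ^ 5 + MvPolynomial.C s * X 0 ^ 4 * X 1 + MvPolynomial.C t * X 0 ^ 3 * X 1 ^ 2 + X 1 ^ 5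

/-- The binary quintic `f_t = z1^4 z2 + t z1^3 z2^2 + z2^5`. -/
noncomputable def ft (t : ℂ) : MvPolynomial (Fin 2) ℂ :=
  X 0 ^ 4 * X 1 + MvPolynomial.C t * X 0 ^ 3 * X 1 ^ 2 + X 1 ^ 5


namespace QuinticAux


lemma eval_substMat (M : Matrix (Fin 2) (Fin 2) ℂ) (Q : MvPolynomial (Fin 2) ℂ)
    (v : Fin 2 → ℂ) :
    eval v (substMat M Q) = eval (fun i => M i 0 * v 0 + M i 1 * v 1) Q := by
  induction Q using MvPolynomial.induction_on with
  | C a => simp [substMat]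
  | add p q hp hq => simp only [substMat, map_add] at *; rw [hp, hq]
  | mul_X p i hp =>
    simp only [substMat] at hp ⊢
    rw [map_mul, map_mul, eval_mul, hp, aeval_X]
    simp

lemma substMat_one (Q : MvPolynomial (Fin 2) ℂ) : substMat 1 Q = Q := by
  have h : (fun i => (MvPolynomial.C ((1 : Matrix (Fin 2) (Fin 2) ℂ) i 0) * X 0 +
      MvPolynomial.C ((1 : Matrix (Fin 2) (Fin 2) ℂ) i 1) * X 1 : MvPolynomial (Fin 2) ℂ)) = X := by
    funext i
    fin_cases i <;> simp [Matrix.one_apply]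
  rw [substMat, h, aeval_X_left_apply]

lemma substMat_comp (M N : Matrix (Fin 2) (Fin 2) ℂ) (Q : MvPolynomial (Fin 2) ℂ) :
    substMat M (substMat N Q) = substMat (N * M) Q := by
  apply MvPolynomial.funext; intro v
  rw [eval_substMat, eval_substMat, eval_substMat]
  have hfun : (fun i => N i 0 * (M 0 0 * v 0 + M 0 1 * v 1) + N i 1 * (M 1 0 * v 0 + M 1 1 * v 1))
      = (fun i => (N * M) i 0 * v 0 + (N * M) i 1 * v 1) := by
    funext i
    simp only [Matrix.mul_apply, Fin.sum_univ_two]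
    ring
  rw [hfun]

lemma squarefree_substMat {Q : MvPolynomial (Fin 2) ℂ} (M : Matrix (Fin 2) (Fin 2) ℂ)
    (hM : IsUnit M.det) (hQ : Squarefree Q) : Squarefree (substMat M Q) := by
  intro x hx
  obtain ⟨c, hc⟩ := hx
  have hinv : substMat M⁻¹ (substMat M Q) = Q := by
    rw [substMat_comp, Matrix.mul_nonsing_inv _ hM, substMat_one]
  have h1 : substMat M⁻¹ x * substMat M⁻¹ x ∣ Q := by
    refine ⟨substMat M⁻¹ c, ?_⟩
    rw [← hinv, hc]
    simp only [substMat, map_mul]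
  have hu := hQ _ h1
  have hx2 : substMat M (substMat M⁻¹ x) = x := by
    rw [substMat_comp, Matrix.nonsing_inv_mul _ hM, substMat_one]
  rw [← hx2]
  unfold substMat
  exact hu.map _

lemma not_isUnit_X (i : Fin 2) : ¬ IsUnit (X i : MvPolynomial (Fin 2) ℂ) := by
  intro h
  have h2 := h.map (eval (fun _ => (0 : ℂ)))
  simp at h2




lemma fin2_finsupp_eq_iff (s t : Fin 2 →₀ ℕ) : s = t ↔ s 0 = t 0 ∧ s 1 = t 1 := by
  constructor
  · rintro rfl; exact ⟨rfl, rfl⟩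
  · rintro ⟨h0, h1⟩
    ext i
    fin_cases i <;> assumption

lemma degree_fin2 (d : Fin 2 →₀ ℕ) : d.degree = d 0 + d 1 := by
  rw [Finsupp.degree]
  show ∑ i ∈ d.support, d i = d 0 + d 1
  rw [Finset.sum_subset (Finset.subset_univ _)
    (fun x _ hx => Finsupp.notMem_support_iff.mp hx)]
  exact Fin.sum_univ_two d

lemma decomp (Q : MvPolynomial (Fin 2) ℂ) (h : Q.IsHomogeneous 5) :
    ∃ a0 a1 a2 a3 a4 a5 : ℂ, Q = C a0 * X 0 ^ 5 + C a1 * X 0 ^ 4 * X 1 +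
      C a2 * X 0 ^ 3 * X 1 ^ 2 + C a3 * X 0 ^ 2 * X 1 ^ 3 + C a4 * X 0 * X 1 ^ 4 +
      C a5 * X 1 ^ 5 := by
  have hmono : ∀ (a : ℂ) (i j : ℕ), (C a * X 0 ^ i * X 1 ^ j : MvPolynomial (Fin 2) ℂ)
      = monomial (Finsupp.single 0 i + Finsupp.single 1 j) a := by
    intro a i j
    rw [X_pow_eq_monomial, X_pow_eq_monomial, C_mul_monomial, monomial_mul]
    simp
  set A0 := coeff (Finsupp.single 0 5 + Finsupp.single 1 0) Q with hA0
  set A1 := coeff (Finsupp.single 0 4 + Finsupp.single 1 1) Q with hA1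
  set A2 := coeff (Finsupp.single 0 3 + Finsupp.single 1 2) Q with hA2
  set A3 := coeff (Finsupp.single 0 2 + Finsupp.single 1 3) Q with hA3
  set A4 := coeff (Finsupp.single 0 1 + Finsupp.single 1 4) Q with hA4
  set A5 := coeff (Finsupp.single 0 0 + Finsupp.single 1 5) Q with hA5
  refine ⟨A0, A1, A2, A3, A4, A5, ?_⟩
  have hrhs : (C A0 * X 0 ^ 5 + C A1 * X 0 ^ 4 * X 1 + C A2 * X 0 ^ 3 * X 1 ^ 2 +
      C A3 * X 0 ^ 2 * X 1 ^ 3 + C A4 * X 0 * X 1 ^ 4 + C A5 * X 1 ^ 5 :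
      MvPolynomial (Fin 2) ℂ)
      = monomial (Finsupp.single 0 5 + Finsupp.single 1 0) A0
      + monomial (Finsupp.single 0 4 + Finsupp.single 1 1) A1
      + monomial (Finsupp.single 0 3 + Finsupp.single 1 2) A2
      + monomial (Finsupp.single 0 2 + Finsupp.single 1 3) A3
      + monomial (Finsupp.single 0 1 + Finsupp.single 1 4) A4
      + monomial (Finsupp.single 0 0 + Finsupp.single 1 5) A5 := by
    rw [← hmono A0 5 0, ← hmono A1 4 1, ← hmono A2 3 2, ← hmono A3 2 3,
      ← hmono A4 1 4, ← hmono A5 0 5]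
    ring
  rw [hrhs]
  ext m
  simp only [coeff_add, coeff_monomial]
  by_cases h5 : m 0 + m 1 = 5
  · have hm : m = Finsupp.single 0 (m 0) + Finsupp.single 1 (m 1) := by
      ext i; fin_cases i <;> simp
    have hle : m 1 ≤ 5 := by omega
    have h0 : m 0 = 5 - m 1 := by omega
    rw [hm, h0]
    interval_cases h1 : m 1 <;>
      norm_num [hA0, hA1, hA2, hA3, hA4, hA5, fin2_finsupp_eq_iff,
        Finsupp.add_apply, Finsupp.single_apply]
  · have hz : coeff m Q = 0 := h.coeff_eq_zero (by rw [degree_fin2]; exact h5)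
    have hne : ∀ i j : ℕ, i + j = 5 →
        ¬ (Finsupp.single (0 : Fin 2) i + Finsupp.single 1 j = m) := by
      intro i j hij hEq
      apply h5
      rw [← hEq]
      simp [Finsupp.add_apply, Finsupp.single_apply, hij]
    rw [hz, if_neg (hne 5 0 rfl), if_neg (hne 4 1 rfl), if_neg (hne 3 2 rfl),
      if_neg (hne 2 3 rfl), if_neg (hne 1 4 rfl), if_neg (hne 0 5 rfl)]
    simp



def Fq (a0 a1 a2 a3 a4 a5 x y : ℂ) : ℂ :=
  a0*x^5 + a1*x^4*y + a2*x^3*y^2 + a3*x^2*y^3 + a4*x*y^4 + a5*y^5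

def Fq1 (a0 a1 a2 a3 a4 a5 x y : ℂ) : ℂ :=
  5*a0*x^4 + 4*a1*x^3*y + 3*a2*x^2*y^2 + 2*a3*x*y^3 + a4*y^4 + 0*a5

def Fq2 (a0 a1 a2 a3 a4 a5 x y : ℂ) : ℂ :=
  a1*x^4 + 2*a2*x^3*y + 3*a3*x^2*y^2 + 4*a4*x*y^3 + 5*a5*y^4 + 0*a0

def Gq (a0 a1 a2 a3 a4 a5 x y c d : ℂ) : ℂ :=
  c^2*(10*a0*x^3+6*a1*x^2*y+3*a2*x*y^2+a3*y^3)
  + c*d*(4*a1*x^3+6*a2*x^2*y+6*a3*x*y^2+4*a4*y^3)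
  + d^2*(a2*x^3+3*a3*x^2*y+6*a4*x*y^2+10*a5*y^3)

def Hq (a0 a1 a2 a3 a4 a5 x y : ℂ) : ℂ :=
  (20*a0*x^3+12*a1*x^2*y+6*a2*x*y^2+2*a3*y^3)*(2*a2*x^3+6*a3*x^2*y+12*a4*x*y^2+20*a5*y^3)
  - (4*a1*x^3+6*a2*x^2*y+6*a3*x*y^2+4*a4*y^3)^2

lemma substMat_form (e0 e1 e2 e3 e4 e5 u1 u2 α β : ℂ) :
    substMat ![![u1, α], ![u2, β]]
      (C e0 * X 0 ^ 5 + C e1 * X 0 ^ 4 * X 1 + C e2 * X 0 ^ 3 * X 1 ^ 2 +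
       C e3 * X 0 ^ 2 * X 1 ^ 3 + C e4 * X 0 * X 1 ^ 4 + C e5 * X 1 ^ 5)
    = C (Fq e0 e1 e2 e3 e4 e5 u1 u2) * X 0 ^ 5
    + C (α * Fq1 e0 e1 e2 e3 e4 e5 u1 u2 + β * Fq2 e0 e1 e2 e3 e4 e5 u1 u2) * X 0 ^ 4 * X 1
    + C (Gq e0 e1 e2 e3 e4 e5 u1 u2 α β) * X 0 ^ 3 * X 1 ^ 2
    + C (Gq e0 e1 e2 e3 e4 e5 α β u1 u2) * X 0 ^ 2 * X 1 ^ 3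
    + C (u1 * Fq1 e0 e1 e2 e3 e4 e5 α β + u2 * Fq2 e0 e1 e2 e3 e4 e5 α β) * X 0 * X 1 ^ 4
    + C (Fq e0 e1 e2 e3 e4 e5 α β) * X 1 ^ 5 := by
  apply MvPolynomial.funext
  intro v
  refine (eval_substMat _ _ _).trans ?_
  simp only [Fq, Fq1, Fq2, Gq, eval_add, eval_mul, eval_pow, eval_C, eval_X,
    Matrix.cons_val', Matrix.cons_val_zero, Matrix.cons_val_one, Matrix.head_cons,
    Matrix.empty_val', Matrix.cons_val_fin_one, Matrix.head_fin_const]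
  ring

lemma key_identity (a0 a1 a2 a3 a4 a5 α β : ℂ) :
    Gq a0 a1 a2 a3 a4 a5 α β (-(Fq2 a0 a1 a2 a3 a4 a5 α β)) (Fq1 a0 a1 a2 a3 a4 a5 α β)
    = (5/8) * Fq a0 a1 a2 a3 a4 a5 α β * Hq a0 a1 a2 a3 a4 a5 α β := by
  simp only [Gq, Fq, Fq1, Fq2, Hq]
  ring

lemma sq1_identity (a0 a1 a2 a3 a4 a5 α β : ℂ) :
    16 * (Fq1 a0 a1 a2 a3 a4 a5 α β)^2
    = 20 * Fq a0 a1 a2 a3 a4 a5 α β * (20*a0*α^3+12*a1*α^2*β+6*a2*α*β^2+2*a3*β^3)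
      - Hq a0 a1 a2 a3 a4 a5 α β * β^2 := by
  simp only [Fq, Fq1, Hq]
  ring

lemma sq2_identity (a0 a1 a2 a3 a4 a5 α β : ℂ) :
    16 * (Fq2 a0 a1 a2 a3 a4 a5 α β)^2
    = 20 * Fq a0 a1 a2 a3 a4 a5 α β * (2*a2*α^3+6*a3*α^2*β+12*a4*α*β^2+20*a5*β^3)
      - Hq a0 a1 a2 a3 a4 a5 α β * α^2 := by
  simp only [Fq, Fq2, Hq]
  ring

lemma exists_H_root (a0 a1 a2 a3 a4 a5 : ℂ) :
    ∃ α β : ℂ, (α ≠ 0 ∨ β ≠ 0) ∧ Hq a0 a1 a2 a3 a4 a5 α β = 0 := by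
  by_cases h6 : 40*a0*a2 - 16*a1^2 = 0
  · refine ⟨1, 0, Or.inl one_ne_zero, ?_⟩
    simp only [Hq]
    linear_combination h6
  · set q : Polynomial ℂ :=
      Polynomial.C (40*a0*a2 - 16*a1^2) * Polynomial.X^6
      + Polynomial.C (-24*a1*a2 + 120*a0*a3) * Polynomial.X^5
      + Polynomial.C (-24*a2^2 + 24*a1*a3 + 240*a0*a4) * Polynomial.X^4
      + Polynomial.C (-32*a2*a3 + 112*a1*a4 + 400*a0*a5) * Polynomial.X^3
      + Polynomial.C (-24*a3^2 + 24*a2*a4 + 240*a1*a5) * Polynomial.X^2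
      + Polynomial.C (-24*a3*a4 + 120*a2*a5) * Polynomial.X
      + Polynomial.C (-16*a4^2 + 40*a3*a5) with hq
    have hc6 : q.coeff 6 = 40*a0*a2 - 16*a1^2 := by
      simp only [hq, Polynomial.coeff_add, Polynomial.coeff_C_mul, Polynomial.coeff_X_pow,
        Polynomial.coeff_C, Polynomial.coeff_X]
      norm_num
    have hdeg : 0 < q.degree := by
      have h1 : (6 : WithBot ℕ) ≤ q.degree :=
        Polynomial.le_degree_of_ne_zero (by rw [hc6]; exact h6)
      exact lt_of_lt_of_le (by norm_num) h1
    obtain ⟨x0, hx0⟩ := Complex.exists_root hdeg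
    refine ⟨x0, 1, Or.inr one_ne_zero, ?_⟩
    have hev : q.eval x0 = 0 := hx0
    simp only [hq, Polynomial.eval_add, Polynomial.eval_mul, Polynomial.eval_pow,
      Polynomial.eval_C, Polynomial.eval_X] at hev
    simp only [Hq]
    linear_combination hev


lemma linEquiv_trans {Q R T : MvPolynomial (Fin 2) ℂ} (M : Matrix (Fin 2) (Fin 2) ℂ)
    (hM : IsUnit M.det) (h : substMat M Q = R) (h2 : LinEquiv R T) : LinEquiv Q T := by
  obtain ⟨D, hD, hs⟩ := h2
  exact ⟨M * D, by rw [Matrix.det_mul]; exact hM.mul hD, by rw [← substMat_comp, h, hs]⟩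

lemma F_ne_zero_at (Q : MvPolynomial (Fin 2) ℂ) (hsf : Squarefree Q)
    (a0 a1 a2 a3 a4 a5 α β : ℂ)
    (hQ : Q = C a0 * X 0 ^ 5 + C a1 * X 0 ^ 4 * X 1 + C a2 * X 0 ^ 3 * X 1 ^ 2 +
      C a3 * X 0 ^ 2 * X 1 ^ 3 + C a4 * X 0 * X 1 ^ 4 + C a5 * X 1 ^ 5)
    (hne0 : α ≠ 0 ∨ β ≠ 0) (hH : Hq a0 a1 a2 a3 a4 a5 α β = 0) :
    Fq a0 a1 a2 a3 a4 a5 α β ≠ 0 := by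
  intro hF
  have h1 : Fq1 a0 a1 a2 a3 a4 a5 α β = 0 := by
    have hs2 : (Fq1 a0 a1 a2 a3 a4 a5 α β)^2 = 0 := by
      linear_combination (1/16) * sq1_identity a0 a1 a2 a3 a4 a5 α β
        + (5/4)*(20*a0*α^3+12*a1*α^2*β+6*a2*α*β^2+2*a3*β^3) * hF - (β^2/16) * hH
    exact pow_eq_zero_iff two_ne_zero |>.mp hs2
  have h2 : Fq2 a0 a1 a2 a3 a4 a5 α β = 0 := by
    have hs2 : (Fq2 a0 a1 a2 a3 a4 a5 α β)^2 = 0 := by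
      linear_combination (1/16) * sq2_identity a0 a1 a2 a3 a4 a5 α β
        + (5/4)*(2*a2*α^3+6*a3*α^2*β+12*a4*α*β^2+20*a5*β^3) * hF - (α^2/16) * hH
    exact pow_eq_zero_iff two_ne_zero |>.mp hs2
  rcases hne0 with hα | hβ
  · have hdet : IsUnit (Matrix.det ![![(0:ℂ), α], ![1, β]]) := by
      apply isUnit_iff_ne_zero.mpr
      erw [Matrix.det_fin_two]
      simp only [Matrix.cons_val', Matrix.cons_val_zero, Matrix.cons_val_one,
        Matrix.head_cons, Matrix.empty_val', Matrix.cons_val_fin_one, Matrix.head_fin_const]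
      simpa using hα
    have hdvd : X 0 * X 0 ∣ substMat ![![(0:ℂ), α], ![1, β]] Q := by
      rw [hQ, substMat_form]
      have hz4 : 0 * Fq1 a0 a1 a2 a3 a4 a5 α β + 1 * Fq2 a0 a1 a2 a3 a4 a5 α β = 0 := by
        rw [h2]; ring
      rw [hz4, hF]
      refine ⟨C (Fq a0 a1 a2 a3 a4 a5 0 1) * X 0 ^ 3
        + C (α * Fq1 a0 a1 a2 a3 a4 a5 0 1 + β * Fq2 a0 a1 a2 a3 a4 a5 0 1) * X 0 ^ 2 * X 1
        + C (Gq a0 a1 a2 a3 a4 a5 0 1 α β) * X 0 * X 1 ^ 2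
        + C (Gq a0 a1 a2 a3 a4 a5 α β 0 1) * X 1 ^ 3, ?_⟩
      simp only [map_zero, zero_mul, add_zero]
      ring
    exact not_isUnit_X 0 (squarefree_substMat _ hdet hsf _ hdvd)
  · have hdet : IsUnit (Matrix.det ![![(1:ℂ), α], ![0, β]]) := by
      apply isUnit_iff_ne_zero.mpr
      erw [Matrix.det_fin_two]
      simp only [Matrix.cons_val', Matrix.cons_val_zero, Matrix.cons_val_one,
        Matrix.head_cons, Matrix.empty_val', Matrix.cons_val_fin_one, Matrix.head_fin_const]
      simpa using hβ
    have hdvd : X 0 * X 0 ∣ substMat ![![(1:ℂ), α], ![0, β]] Q := by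
      rw [hQ, substMat_form]
      have hz4 : 1 * Fq1 a0 a1 a2 a3 a4 a5 α β + 0 * Fq2 a0 a1 a2 a3 a4 a5 α β = 0 := by
        rw [h1]; ring
      rw [hz4, hF]
      refine ⟨C (Fq a0 a1 a2 a3 a4 a5 1 0) * X 0 ^ 3
        + C (α * Fq1 a0 a1 a2 a3 a4 a5 1 0 + β * Fq2 a0 a1 a2 a3 a4 a5 1 0) * X 0 ^ 2 * X 1
        + C (Gq a0 a1 a2 a3 a4 a5 1 0 α β) * X 0 * X 1 ^ 2
        + C (Gq a0 a1 a2 a3 a4 a5 α β 1 0) * X 1 ^ 3, ?_⟩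
      simp only [map_zero, zero_mul, add_zero]
      ring
    exact not_isUnit_X 0 (squarefree_substMat _ hdet hsf _ hdvd)

lemma normalize_form (R : MvPolynomial (Fin 2) ℂ) (hsf : Squarefree R)
    (b0 b1 b2 b5 : ℂ) (hb5 : b5 ≠ 0)
    (hR : R = C b0 * X 0 ^ 5 + C b1 * X 0 ^ 4 * X 1 + C b2 * X 0 ^ 3 * X 1 ^ 2 +
      C 0 * X 0 ^ 2 * X 1 ^ 3 + C 0 * X 0 * X 1 ^ 4 + C b5 * X 1 ^ 5) :
    (∃ s t : ℂ, LinEquiv R (fst s t)) ∨ (∃ t : ℂ, LinEquiv R (ft t)) := by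
  obtain ⟨μ, hμ⟩ := IsAlgClosed.exists_pow_nat_eq (k := ℂ) b5⁻¹ (n := 5) (by norm_num)
  have hμ0 : μ ≠ 0 := by
    intro h
    apply inv_ne_zero hb5
    rw [← hμ, h]
    norm_num
  have c3 : ∀ l : ℂ, Gq b0 b1 b2 0 0 b5 0 μ l 0 = 0 := by
    intro l; simp [Gq]
  have c4 : ∀ l : ℂ, l * Fq1 b0 b1 b2 0 0 b5 0 μ + 0 * Fq2 b0 b1 b2 0 0 b5 0 μ = 0 := by
    intro l; simp [Fq1]
  have c5 : Fq b0 b1 b2 0 0 b5 0 μ = 1 := by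
    simp only [Fq]
    rw [hμ]
    field_simp
    simp
  by_cases hb0 : b0 = 0
  · right
    have hb1 : b1 ≠ 0 := by
      intro hb1
      refine not_isUnit_X 1 (hsf _ ?_)
      rw [hR, hb0, hb1]
      refine ⟨C b2 * X 0 ^ 3 + C b5 * X 1 ^ 3, ?_⟩
      simp only [map_zero, zero_mul, add_zero, zero_add]
      ring
    obtain ⟨l, hl⟩ := IsAlgClosed.exists_pow_nat_eq (k := ℂ) (μ*b1)⁻¹ (n := 4) (by norm_num)
    have hl0 : l ≠ 0 := by
      intro h
      apply inv_ne_zero (mul_ne_zero hμ0 hb1)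
      rw [← hl, h]
      norm_num
    refine ⟨Gq b0 b1 b2 0 0 b5 l 0 0 μ, ![![l, 0], ![0, μ]], ?_, ?_⟩
    · apply isUnit_iff_ne_zero.mpr
      erw [Matrix.det_fin_two]
      simp only [Matrix.cons_val', Matrix.cons_val_zero, Matrix.cons_val_one,
        Matrix.head_cons, Matrix.empty_val', Matrix.cons_val_fin_one, Matrix.head_fin_const]
      simpa using mul_ne_zero hl0 hμ0
    · rw [hR, substMat_form]
      have c0 : Fq b0 b1 b2 0 0 b5 l 0 = 0 := by simp [Fq, hb0]
      have c1 : 0 * Fq1 b0 b1 b2 0 0 b5 l 0 + μ * Fq2 b0 b1 b2 0 0 b5 l 0 = 1 := by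
        simp only [Fq1, Fq2]
        linear_combination (by rw [hl]; exact mul_inv_cancel₀ (mul_ne_zero hμ0 hb1) : μ * b1 * l ^ 4 = 1)
      rw [c0, c1, c3 l, c4 l, c5]
      simp only [map_zero, map_one, zero_mul, one_mul, add_zero, zero_add, ft]
  · left
    obtain ⟨l, hl⟩ := IsAlgClosed.exists_pow_nat_eq (k := ℂ) b0⁻¹ (n := 5) (by norm_num)
    refine ⟨0 * Fq1 b0 b1 b2 0 0 b5 l 0 + μ * Fq2 b0 b1 b2 0 0 b5 l 0,
      Gq b0 b1 b2 0 0 b5 l 0 0 μ, ![![l, 0], ![0, μ]], ?_, ?_⟩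
    · have hl0 : l ≠ 0 := by
        intro h
        apply inv_ne_zero hb0
        rw [← hl, h]
        norm_num
      apply isUnit_iff_ne_zero.mpr
      erw [Matrix.det_fin_two]
      simp only [Matrix.cons_val', Matrix.cons_val_zero, Matrix.cons_val_one,
        Matrix.head_cons, Matrix.empty_val', Matrix.cons_val_fin_one, Matrix.head_fin_const]
      simpa using mul_ne_zero hl0 hμ0
    · rw [hR, substMat_form]
      have c0 : Fq b0 b1 b2 0 0 b5 l 0 = 1 := by
        simp only [Fq]
        rw [hl]
        field_simp
        simp
      rw [c0, c3 l, c4 l, c5]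
      simp only [map_zero, map_one, zero_mul, one_mul, add_zero, zero_add, fst]


end QuinticAux

open QuinticAux in

/-- Every nonzero square-free binary quintic is linearly equivalent either to
some `f_{s,t}` or to some `f_t`. -/
theorem quintic_canonical_form (Q : MvPolynomial (Fin 2) ℂ)
    (hhom : Q.IsHomogeneous 5) (hne : Q ≠ 0) (hsf : Squarefree Q) :
    (∃ s t : ℂ, LinEquiv Q (fst s t)) ∨ (∃ t : ℂ, LinEquiv Q (ft t)) := by
  classical
  obtain ⟨a0, a1, a2, a3, a4, a5, hQ⟩ := QuinticAux.decomp Q hhom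
  obtain ⟨α, β, hne0, hH⟩ := QuinticAux.exists_H_root a0 a1 a2 a3 a4 a5
  have hF := QuinticAux.F_ne_zero_at Q hsf a0 a1 a2 a3 a4 a5 α β hQ hne0 hH
  have h3 : Gq a0 a1 a2 a3 a4 a5 α β (-(Fq2 a0 a1 a2 a3 a4 a5 α β)) (Fq1 a0 a1 a2 a3 a4 a5 α β) = 0 := by
    rw [QuinticAux.key_identity, hH]
    ring
  have h4 : (-(Fq2 a0 a1 a2 a3 a4 a5 α β)) * Fq1 a0 a1 a2 a3 a4 a5 α β + (Fq1 a0 a1 a2 a3 a4 a5 α β) * Fq2 a0 a1 a2 a3 a4 a5 α β = 0 := by ring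
  have euler : α * Fq1 a0 a1 a2 a3 a4 a5 α β + β * Fq2 a0 a1 a2 a3 a4 a5 α β = 5 * Fq a0 a1 a2 a3 a4 a5 α β := by
    simp only [QuinticAux.Fq, QuinticAux.Fq1, QuinticAux.Fq2]
    ring
  have hdet1 : IsUnit (Matrix.det ![![(-(Fq2 a0 a1 a2 a3 a4 a5 α β)), α], ![(Fq1 a0 a1 a2 a3 a4 a5 α β), β]]) := by
    apply isUnit_iff_ne_zero.mpr
    erw [Matrix.det_fin_two]
    simp only [Matrix.cons_val', Matrix.cons_val_zero, Matrix.cons_val_one,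
      Matrix.head_cons, Matrix.empty_val', Matrix.cons_val_fin_one, Matrix.head_fin_const]
    intro hc
    apply hF
    linear_combination (-1/5) * euler + (-1/5) * hc
  have hsub1 : substMat ![![(-(Fq2 a0 a1 a2 a3 a4 a5 α β)), α], ![(Fq1 a0 a1 a2 a3 a4 a5 α β), β]] Q
      = C (Fq a0 a1 a2 a3 a4 a5 (-(Fq2 a0 a1 a2 a3 a4 a5 α β)) (Fq1 a0 a1 a2 a3 a4 a5 α β)) * X 0 ^ 5
      + C (α * Fq1 a0 a1 a2 a3 a4 a5 (-(Fq2 a0 a1 a2 a3 a4 a5 α β)) (Fq1 a0 a1 a2 a3 a4 a5 α β) + β * Fq2 a0 a1 a2 a3 a4 a5 (-(Fq2 a0 a1 a2 a3 a4 a5 α β)) (Fq1 a0 a1 a2 a3 a4 a5 α β)) * X 0 ^ 4 * X 1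
      + C (Gq a0 a1 a2 a3 a4 a5 (-(Fq2 a0 a1 a2 a3 a4 a5 α β)) (Fq1 a0 a1 a2 a3 a4 a5 α β) α β) * X 0 ^ 3 * X 1 ^ 2
      + C 0 * X 0 ^ 2 * X 1 ^ 3
      + C 0 * X 0 * X 1 ^ 4
      + C (Fq a0 a1 a2 a3 a4 a5 α β) * X 1 ^ 5 := by
    rw [hQ, QuinticAux.substMat_form, h3, h4]
  have hsf1 := QuinticAux.squarefree_substMat _ hdet1 hsf
  have hres := QuinticAux.normalize_form _ hsf1 _ _ _ _ hF hsub1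
  rcases hres with ⟨s, t, hlin⟩ | ⟨t, hlin⟩
  · exact Or.inl ⟨s, t, QuinticAux.linEquiv_trans _ hdet1 rfl hlin⟩
  · exact Or.inr ⟨t, QuinticAux.linEquiv_trans _ hdet1 rfl hlin⟩
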